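/- arXiv:1404.6299 — 2 statements merged into one kernel-verified Lean document; each statement's English description precedes it below -/
import Mathlib

section
/- Let G be a graph without a 2-factor and let (S,T) be a minimum barrier with h_G(S,T) smallest among minimum barriers. If v ∈ T satisfies |𝒞_v| ≥ 2, then every component D ∈ 𝒞_{1v} has at least 2 vertices. -/
/-!
Suppose a component `D ∈ 𝒞_{1v}` is a single vertex `c`; then the only neighbour of `c` outside
`S` is `v`. Exchange the two: `T' = T - v + c`. In `G - (S ∪ T')` the vertex `v` merges with every
component of `G - (S ∪ T)` adjacent to it, the remaining components survive, and
`|S ∪ T'| = |S ∪ T|`. If `a` of the absorbed components are odd, `v` sends at least `a` edges into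
them, and when it sends exactly `a` and has no neighbour in `T`, a parity count shows that the
merged component is odd; either way `δ(S, T') ≤ δ(S, T)`, so `(S, T')` is again a minimum
barrier. As `|𝒞_v| ≥ 2` forces `a ≥ 1`, it has fewer odd components than `(S, T)`.
-/

open SimpleGraph

namespace VizingTwoFactor

variable {V : Type*}

/-- The degree of a vertex, as the `ncard` of its neighbor set. -/
noncomputable def ndeg (G : SimpleGraph V) (v : V) : ℕ :=
  (G.neighborSet v).ncard

/-- `G` is bipartite with parts `X` and `T`. -/
def IsBipartiteWith (G : SimpleGraph V) (X T : Set V) : Prop :=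
  Disjoint X T ∧ ∀ u v : V, G.Adj u v → (u ∈ X ∧ v ∈ T) ∨ (u ∈ T ∧ v ∈ X)

/-- The set of neighbors of a set of vertices. -/
def NSet (G : SimpleGraph V) (A : Set V) : Set V :=
  {v | ∃ a ∈ A, G.Adj a v}

/-- `G` has a matching saturating the vertex set `T`. -/
def HasMatchingSaturating (G : SimpleGraph V) (T : Set V) : Prop :=
  ∃ M : G.Subgraph, M.IsMatching ∧ T ⊆ M.verts

/-- Number of (ordered) adjacent pairs with first coordinate in `A` and second in `B`;
for disjoint `A`, `B` this is the number of edges between `A` and `B`. -/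
noncomputable def eBetween (G : SimpleGraph V) (A B : Set V) : ℕ :=
  {p : V × V | p.1 ∈ A ∧ p.2 ∈ B ∧ G.Adj p.1 p.2}.ncard

/-- Number of neighbors of `v` inside `A`. -/
noncomputable def degIn (G : SimpleGraph V) (A : Set V) (v : V) : ℕ :=
  (G.neighborSet v ∩ A).ncard

/-- The vertex set (in `V`) of a connected component of an induced subgraph. -/
def csupp (G : SimpleGraph V) (U : Set V) (C : (G.induce U).ConnectedComponent) : Set V :=
  Subtype.val '' C.supp

/-- The odd components of `G − (S ∪ T)` w.r.t. `(S,T)`: components sending an odd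
number of edges to `T`. -/
noncomputable def oddComps (G : SimpleGraph V) (S T : Set V) :
    Set ((G.induce (S ∪ T)ᶜ).ConnectedComponent) :=
  {C | Odd (eBetween G (csupp G (S ∪ T)ᶜ C) T)}

/-- `h_G(S,T)`: the number of odd components. -/
noncomputable def hNum (G : SimpleGraph V) (S T : Set V) : ℕ :=
  (oddComps G S T).ncard

/-- `δ_G(S,T) = 2|S| + Σ_{v∈T} deg_{G−S}(v) − 2|T| − h_G(S,T)`. -/
noncomputable def deltaST (G : SimpleGraph V) (S T : Set V) : ℤ :=
  2 * S.ncard + (∑ᶠ v ∈ T, (degIn G Sᶜ v : ℤ)) - 2 * T.ncard - hNum G S T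

/-- A barrier. -/
def IsBarrier (G : SimpleGraph V) (S T : Set V) : Prop :=
  Disjoint S T ∧ deltaST G S T ≤ -2

/-- A minimum barrier: minimizes `|S ∪ T|` among barriers. -/
def IsMinBarrier (G : SimpleGraph V) (S T : Set V) : Prop :=
  IsBarrier G S T ∧ ∀ S' T' : Set V, IsBarrier G S' T' → (S ∪ T).ncard ≤ (S' ∪ T').ncard

/-- `G` has a 2-factor: a spanning subgraph in which every vertex has degree 2. -/
def HasTwoFactor (G : SimpleGraph V) : Prop :=
  ∃ H : SimpleGraph V, H ≤ G ∧ ∀ v : V, ndeg H v = 2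

/-- `G` has a proper edge coloring with `k` colors. -/
def HasEdgeColoring (G : SimpleGraph V) (k : ℕ) : Prop :=
  ∃ f : G.edgeSet → Fin k, ∀ e₁ e₂ : G.edgeSet, e₁ ≠ e₂ →
    (∃ v : V, v ∈ (e₁ : Sym2 V) ∧ v ∈ (e₂ : Sym2 V)) → f e₁ ≠ f e₂

/-- The chromatic index `χ'(G)`. -/
noncomputable def chromIdx (G : SimpleGraph V) : ℕ :=
  sInf {k | HasEdgeColoring G k}

/-- `Δ` is the maximum degree of `G`. -/
def IsMaxDegree (G : SimpleGraph V) (Δ : ℕ) : Prop :=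
  (∀ v : V, ndeg G v ≤ Δ) ∧ ∃ v : V, ndeg G v = Δ

/-- `G` is `Δ`-critical: no isolated vertices, maximum degree `Δ`, `χ'(G) = Δ + 1`, and
`χ'(G − e) = Δ` for every edge `e`. -/
def IsDeltaCritical (G : SimpleGraph V) (Δ : ℕ) : Prop :=
  (∀ v : V, ∃ u : V, G.Adj v u) ∧ IsMaxDegree G Δ ∧ chromIdx G = Δ + 1 ∧
    ∀ e ∈ G.edgeSet, chromIdx (G.deleteEdges {e}) = Δ

/-- `T` is an independent set in `G`. -/
def IsIndep (G : SimpleGraph V) (T : Set V) : Prop :=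
  ∀ u ∈ T, ∀ v ∈ T, ¬ G.Adj u v

/-- The bipartite graph `H*` consisting of the edges of `G` between `V(G) \ T` and `T`. -/
def betweenGraph (G : SimpleGraph V) (T : Set V) : SimpleGraph V where
  Adj u v := G.Adj u v ∧ ((u ∉ T ∧ v ∈ T) ∨ (u ∈ T ∧ v ∉ T))
  symm := ⟨fun u v h => ⟨h.1.symm, h.2.elim (fun h' => Or.inr ⟨h'.2, h'.1⟩)
    (fun h' => Or.inl ⟨h'.2, h'.1⟩)⟩⟩
  loopless := ⟨fun u h => G.loopless.irrefl u h.1⟩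

section sets

variable {α : Type*} {s : Set α} {a b : α}

lemma ncard_sep_odd_eq_finsum_mod_two (hs : s.Finite) (f : α → ℕ) :
    {a ∈ s | Odd (f a)}.ncard = ∑ᶠ a ∈ s, f a % 2 := by
  induction s, hs using Set.Finite.induction_on with
  | empty => simp
  | @insert a s ha hs ih =>
    rw [finsum_mem_insert _ ha hs, ← ih]
    by_cases h : Odd (f a)
    · have : {x ∈ insert a s | Odd (f x)} = insert a {x ∈ s | Odd (f x)} := by
        ext x; by_cases hx : x = a <;> simp_all
      rw [this, Set.ncard_insert_of_notMem (fun h' => ha h'.1) (hs.sep _), Nat.odd_iff.1 h,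
        add_comm]
    · have : {x ∈ insert a s | Odd (f x)} = {x ∈ s | Odd (f x)} := by
        ext x; by_cases hx : x = a <;> simp_all
      rw [this, Nat.not_odd_iff.1 h, zero_add]

lemma finsum_mem_le_finsum_mem (hs : s.Finite) {f g : α → ℕ} (h : ∀ a ∈ s, f a ≤ g a) :
    ∑ᶠ a ∈ s, f a ≤ ∑ᶠ a ∈ s, g a := by
  rw [finsum_mem_eq_finite_toFinset_sum _ hs, finsum_mem_eq_finite_toFinset_sum _ hs]
  exact Finset.sum_le_sum fun a ha => h a (hs.mem_toFinset.1 ha)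

lemma finsum_mem_mod_mod (hs : s.Finite) (f : α → ℕ) (n : ℕ) :
    (∑ᶠ a ∈ s, f a % n) % n = (∑ᶠ a ∈ s, f a) % n := by
  rw [finsum_mem_eq_finite_toFinset_sum _ hs, finsum_mem_eq_finite_toFinset_sum _ hs,
    Finset.sum_nat_mod _ n f]

lemma union_insert_sdiff {S T : Set α} (hbS : b ∉ S) :
    S ∪ insert a (T \ {b}) = insert a ((S ∪ T) \ {b}) := by
  ext x
  by_cases hxb : x = b <;> by_cases hxa : x = a <;> simp_all

lemma compl_insert_sdiff (ha : a ∉ s) (hb : b ∈ s) :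
    (insert a (s \ {b}))ᶜ = insert b (sᶜ \ {a}) := by
  ext x
  by_cases hxb : x = b <;> by_cases hxa : x = a <;> simp_all

lemma finsum_mem_insert_sdiff_add {M : Type*} [AddCommMonoid M] (hs : s.Finite) (ha : a ∉ s)
    (hb : b ∈ s) (f : α → M) :
    ∑ᶠ x ∈ insert a (s \ {b}), f x + f b = ∑ᶠ x ∈ s, f x + f a := by
  conv_rhs => rw [← Set.insert_eq_of_mem hb, ← Set.insert_sdiff_singleton]
  rw [finsum_mem_insert _ (fun h => ha h.1) hs.sdiff,
    finsum_mem_insert _ (fun h : b ∈ s \ {b} => h.2 rfl) hs.sdiff]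
  abel

end sets

/-- The vertex set of the component of `G[W]` containing `u`; empty if `u ∉ W`. -/
def reachSet (G : SimpleGraph V) (W : Set V) (u : V) : Set V :=
  {w | ∃ (hu : u ∈ W) (hw : w ∈ W), (G.induce W).Reachable ⟨u, hu⟩ ⟨w, hw⟩}

section reachSet

variable {G : SimpleGraph V} {W W₁ W₂ : Set V} {u w x z : V}

lemma reachSet_subset : reachSet G W u ⊆ W := fun _ ⟨_, hw, _⟩ => hw

lemma mem_reachSet_self (hu : u ∈ W) : u ∈ reachSet G W u := ⟨hu, hu, .rfl⟩

lemma mem_reachSet_symm (h : w ∈ reachSet G W u) : u ∈ reachSet G W w :=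
  let ⟨hu, hw, r⟩ := h; ⟨hw, hu, r.symm⟩

lemma reachSet_eq_of_mem (h : w ∈ reachSet G W u) : reachSet G W w = reachSet G W u := by
  obtain ⟨hu, hw, r⟩ := h
  ext x
  exact ⟨fun ⟨_, hx, r'⟩ => ⟨hu, hx, r.trans r'⟩, fun ⟨_, hx, r'⟩ => ⟨hw, hx, r.symm.trans r'⟩⟩

lemma mem_reachSet_of_adj (hw : w ∈ reachSet G W u) (hz : z ∈ W) (hwz : G.Adj w z) :
    z ∈ reachSet G W u :=
  let ⟨hu, hw, r⟩ := hw
  ⟨hu, hz, r.trans (Adj.reachable (G := G.induce W) (u := ⟨w, hw⟩) (v := ⟨z, hz⟩) hwz)⟩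

lemma reachSet_mono (h : W₁ ⊆ W₂) : reachSet G W₁ u ⊆ reachSet G W₂ u :=
  fun _ ⟨hu, hw, r⟩ => ⟨h hu, h hw, r.map ⟨Set.inclusion h, id⟩⟩

lemma reachSet_sdiff_singleton (hx : x ∉ reachSet G W u) :
    reachSet G (W \ {x}) u = reachSet G W u := by
  refine (reachSet_mono Set.sdiff_subset).antisymm fun w ⟨hu, hw, r⟩ => ?_
  suffices ∀ y : W, Relation.ReflTransGen (G.induce W).Adj ⟨u, hu⟩ y →
      (y : V) ∈ reachSet G (W \ {x}) u from this ⟨w, hw⟩ ((reachable_iff_reflTransGen _ _).1 r)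
  intro y r
  induction r with
  | refl => exact mem_reachSet_self ⟨hu, fun h => hx (h ▸ mem_reachSet_self hu)⟩
  | @tail b y hb hby ih =>
    have hy : (y : V) ∈ reachSet G W u :=
      ⟨hu, y.2, (reachable_iff_reflTransGen _ _).2 (hb.tail hby)⟩
    exact mem_reachSet_of_adj ih ⟨y.2, fun h => hx (h ▸ hy)⟩ hby

lemma exists_adj_mem_reachSet_sdiff (hu : u ∈ reachSet G W x) (hux : u ≠ x) :
    ∃ z ∈ reachSet G (W \ {x}) u, G.Adj x z := by
  obtain ⟨hu, hx, r⟩ := mem_reachSet_symm hu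
  suffices ∀ a : W, Relation.ReflTransGen (G.induce W).Adj a ⟨x, hx⟩ → (a : V) ≠ x →
      ∃ z ∈ reachSet G (W \ {x}) a, G.Adj x z from
    this ⟨u, hu⟩ ((reachable_iff_reflTransGen _ _).1 r) hux
  intro a r
  induction r using Relation.ReflTransGen.head_induction_on with
  | refl => exact fun h => absurd rfl h
  | @head a b hab _ ih =>
    intro hax
    have ha : (a : V) ∈ W \ {x} := ⟨a.2, hax⟩
    by_cases hbx : (b : V) = x
    · exact ⟨a, mem_reachSet_self ha, hbx ▸ (hab : G.Adj a b).symm⟩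
    · obtain ⟨z, hz, hxz⟩ := ih hbx
      have hb : (b : V) ∈ reachSet G (W \ {x}) a :=
        mem_reachSet_of_adj (mem_reachSet_self ha) ⟨b.2, hbx⟩ hab
      exact ⟨z, reachSet_eq_of_mem hb ▸ hz, hxz⟩

end reachSet

def componentSets (G : SimpleGraph V) (W : Set V) : Set (Set V) :=
  reachSet G W '' W

section componentSets

variable {G : SimpleGraph V} {W A : Set V} {u : V}

lemma reachSet_mem_componentSets (hu : u ∈ W) : reachSet G W u ∈ componentSets G W :=
  ⟨u, hu, rfl⟩

lemma subset_of_mem_componentSets (hA : A ∈ componentSets G W) : A ⊆ W := by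
  obtain ⟨u, -, rfl⟩ := hA
  exact reachSet_subset

lemma reachSet_eq_of_mem_componentSets (hA : A ∈ componentSets G W) (hu : u ∈ A) :
    reachSet G W u = A := by
  obtain ⟨w, -, rfl⟩ := hA
  exact reachSet_eq_of_mem hu

lemma pairwiseDisjoint_componentSets : (componentSets G W).PairwiseDisjoint id :=
  fun _ hA _ hB hAB => Set.disjoint_left.2 fun _ hxA hxB =>
    hAB ((reachSet_eq_of_mem_componentSets hA hxA).symm.trans
      (reachSet_eq_of_mem_componentSets hB hxB))

lemma sUnion_componentSets : ⋃₀ componentSets G W = W :=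
  (Set.sUnion_subset fun _ => subset_of_mem_componentSets).antisymm
    fun _ hu => ⟨_, reachSet_mem_componentSets hu, mem_reachSet_self hu⟩

lemma csupp_connectedComponentMk (hu : u ∈ W) :
    csupp G W ((G.induce W).connectedComponentMk ⟨u, hu⟩) = reachSet G W u := by
  ext w
  simp only [csupp, reachSet, Set.mem_image, ConnectedComponent.mem_supp_iff,
    ConnectedComponent.eq, Subtype.exists, exists_and_right, exists_eq_right]
  exact ⟨fun ⟨hw, r⟩ => ⟨hu, hw, r.symm⟩, fun ⟨_, hw, r⟩ => ⟨hw, r.symm⟩⟩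

lemma range_csupp : Set.range (csupp G W) = componentSets G W := by
  ext A
  constructor
  · rintro ⟨C, rfl⟩
    obtain ⟨⟨u, hu⟩, rfl⟩ := C.exists_rep
    exact csupp_connectedComponentMk hu ▸ reachSet_mem_componentSets hu
  · rintro ⟨u, hu, rfl⟩
    exact ⟨_, csupp_connectedComponentMk hu⟩

lemma csupp_injective : Function.Injective (csupp G W) :=
  (Set.image_injective.2 Subtype.val_injective).comp ConnectedComponent.supp_injective

end componentSets

def touchingComponents (G : SimpleGraph V) (W : Set V) (c v : V) : Set (Set V) :=
  {A ∈ componentSets G W | A ≠ {c} ∧ ¬Disjoint A (G.neighborSet v)}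

def avoidingComponents (G : SimpleGraph V) (W : Set V) (v : V) : Set (Set V) :=
  {A ∈ componentSets G W | Disjoint A (G.neighborSet v)}

section exchange

variable {G : SimpleGraph V} {W : Set V} {c v u : V}

lemma mem_of_reachSet_eq_singleton (hiso : reachSet G W c = {c}) : c ∈ W :=
  reachSet_subset (hiso ▸ rfl : c ∈ reachSet G W c)

lemma reachSet_eq_singleton_iff (hiso : reachSet G W c = {c}) (hu : u ∈ W) :
    reachSet G W u = {c} ↔ u = c :=
  ⟨fun h => (h ▸ mem_reachSet_self hu : u ∈ ({c} : Set V)), fun h => h ▸ hiso⟩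

lemma reachSet_sdiff_of_isolated (hiso : reachSet G W c = {c}) (hu : u ∈ W) (huc : u ≠ c) :
    reachSet G (W \ {c}) u = reachSet G W u :=
  reachSet_sdiff_singleton fun hc =>
    huc ((reachSet_eq_singleton_iff hiso hu).1 (reachSet_eq_of_mem hc ▸ hiso))

lemma mem_reachSet_exchange_iff (hvW : v ∉ W) (hiso : reachSet G W c = {c}) (hu : u ∈ W)
    (huc : u ≠ c) :
    v ∈ reachSet G (insert v (W \ {c})) u ↔ ¬Disjoint (reachSet G W u) (G.neighborSet v) := by
  rw [Set.not_disjoint_iff]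
  constructor
  · intro hv
    obtain ⟨z, hz, hvz⟩ := exists_adj_mem_reachSet_sdiff (mem_reachSet_symm hv)
      (ne_of_mem_of_not_mem hu hvW)
    rw [Set.insert_sdiff_self_of_notMem (fun h => hvW h.1),
      reachSet_sdiff_of_isolated hiso hu huc] at hz
    exact ⟨z, hz, hvz⟩
  · rintro ⟨z, hz, hvz⟩
    rw [← reachSet_sdiff_of_isolated hiso hu huc] at hz
    exact mem_reachSet_of_adj (reachSet_mono (Set.subset_insert _ _) hz) (Set.mem_insert _ _)
      (G.adj_symm hvz)

lemma reachSet_exchange_of_notMem (hvW : v ∉ W) (hiso : reachSet G W c = {c}) (hu : u ∈ W)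
    (huc : u ≠ c) (hv : v ∉ reachSet G (insert v (W \ {c})) u) :
    reachSet G (insert v (W \ {c})) u = reachSet G W u := by
  rw [← reachSet_sdiff_singleton hv, Set.insert_sdiff_self_of_notMem (fun h => hvW h.1),
    reachSet_sdiff_of_isolated hiso hu huc]

lemma reachSet_exchange_self (hvW : v ∉ W) (hiso : reachSet G W c = {c}) :
    reachSet G (insert v (W \ {c})) v = insert v (⋃₀ touchingComponents G W c v) := by
  ext u
  by_cases huv : u = v
  · subst huv
    simpa using mem_reachSet_self (Set.mem_insert u _)
  simp only [Set.mem_insert_iff, huv, false_or]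
  constructor
  · intro hu
    obtain ⟨huW, huc⟩ := (Set.mem_insert_iff.1 (reachSet_subset hu)).resolve_left huv
    refine ⟨reachSet G W u, ⟨reachSet_mem_componentSets huW,
      fun h => huc ((reachSet_eq_singleton_iff hiso huW).1 h),
      (mem_reachSet_exchange_iff hvW hiso huW huc).1 (mem_reachSet_symm hu)⟩,
      mem_reachSet_self huW⟩
  · rintro ⟨A, ⟨hA, hAc, hAv⟩, huA⟩
    have huW := subset_of_mem_componentSets hA huA
    rw [← reachSet_eq_of_mem_componentSets hA huA] at hAc hAv
    exact mem_reachSet_symm ((mem_reachSet_exchange_iff hvW hiso huW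
      (fun h => hAc ((reachSet_eq_singleton_iff hiso huW).2 h))).2 hAv)

lemma componentSets_exchange (hvW : v ∉ W) (hiso : reachSet G W c = {c}) (hvc : G.Adj v c) :
    componentSets G (insert v (W \ {c})) =
      insert (insert v (⋃₀ touchingComponents G W c v)) (avoidingComponents G W v) := by
  ext A
  constructor
  · rintro ⟨u, hu, rfl⟩
    by_cases hv : v ∈ reachSet G (insert v (W \ {c})) u
    · left
      rw [← reachSet_eq_of_mem hv, reachSet_exchange_self hvW hiso]
    · obtain ⟨huW, huc⟩ := (Set.mem_insert_iff.1 hu).resolve_left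
        (by rintro rfl; exact hv (mem_reachSet_self hu))
      right
      rw [reachSet_exchange_of_notMem hvW hiso huW huc hv]
      exact ⟨reachSet_mem_componentSets huW,
        not_not.1 ((mem_reachSet_exchange_iff hvW hiso huW huc).not.1 hv)⟩
  · rintro (rfl | ⟨⟨u, hu, rfl⟩, hAv⟩)
    · rw [← reachSet_exchange_self hvW hiso]
      exact reachSet_mem_componentSets (Set.mem_insert _ _)
    · have huc : u ≠ c := by
        rintro rfl
        exact Set.disjoint_left.1 hAv (mem_reachSet_self hu) hvc
      have hv : v ∉ reachSet G (insert v (W \ {c})) u :=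
        fun h => (mem_reachSet_exchange_iff hvW hiso hu huc).1 h hAv
      rw [← reachSet_exchange_of_notMem hvW hiso hu huc hv]
      exact reachSet_mem_componentSets (Set.mem_insert_of_mem _ ⟨hu, huc⟩)

lemma componentSets_eq_insert (hiso : reachSet G W c = {c}) :
    componentSets G W =
      insert {c} (touchingComponents G W c v ∪ avoidingComponents G W v) := by
  ext A
  constructor
  · intro hA
    by_cases hAc : A = {c}
    · exact Or.inl hAc
    · by_cases hAv : Disjoint A (G.neighborSet v)
      exacts [Or.inr (Or.inr ⟨hA, hAv⟩), Or.inr (Or.inl ⟨hA, hAc, hAv⟩)]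
  · rintro (rfl | ⟨hA, -⟩ | ⟨hA, -⟩)
    exacts [hiso ▸ reachSet_mem_componentSets (mem_of_reachSet_eq_singleton hiso), hA, hA]

end exchange

section counting

variable {G : SimpleGraph V} {A A₁ A₂ B B₁ B₂ : Set V} {F : Set (Set V)} {a b : V}

lemma eBetween_singleton_left : eBetween G {a} B = degIn G B a := by
  have : {p : V × V | p.1 ∈ ({a} : Set V) ∧ p.2 ∈ B ∧ G.Adj p.1 p.2} =
      Prod.mk a '' (G.neighborSet a ∩ B) := by
    ext ⟨x, y⟩
    simp only [Set.mem_ofPred_eq, Set.mem_singleton_iff, Set.mem_image, Set.mem_inter_iff,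
      mem_neighborSet, Prod.mk.injEq]
    constructor
    · rintro ⟨rfl, hy, hxy⟩
      exact ⟨y, ⟨hxy, hy⟩, rfl, rfl⟩
    · rintro ⟨y, ⟨hay, hy⟩, rfl, rfl⟩
      exact ⟨rfl, hy, hay⟩
  rw [eBetween, this, Set.ncard_image_of_injective _ (Prod.mk_right_injective a), degIn]

lemma eBetween_singleton_right : eBetween G A {b} = degIn G A b := by
  have : {p : V × V | p.1 ∈ A ∧ p.2 ∈ ({b} : Set V) ∧ G.Adj p.1 p.2} =
      (fun x => (x, b)) '' (G.neighborSet b ∩ A) := by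
    ext ⟨x, y⟩
    simp only [Set.mem_ofPred_eq, Set.mem_singleton_iff, Set.mem_image, Set.mem_inter_iff,
      mem_neighborSet, Prod.mk.injEq]
    constructor
    · rintro ⟨hx, rfl, hxy⟩
      exact ⟨x, ⟨hxy.symm, hx⟩, rfl, rfl⟩
    · rintro ⟨x, ⟨hbx, hx⟩, rfl, rfl⟩
      exact ⟨hx, rfl, hbx.symm⟩
  rw [eBetween, this, Set.ncard_image_of_injective _ (Prod.mk_left_injective b), degIn]

lemma degIn_singleton_eq_one_iff : degIn G {b} a = 1 ↔ G.Adj a b := by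
  by_cases h : G.Adj a b <;> simp [degIn, h]

lemma degIn_singleton_self : degIn G {a} a = 0 := by
  simp [degIn]

lemma degIn_eq_zero_of_disjoint (h : Disjoint A (G.neighborSet b)) : degIn G A b = 0 := by
  rw [degIn, Set.disjoint_iff_inter_eq_empty.1 h.symm, Set.ncard_empty]

variable [Finite V]

lemma degIn_pos_of_not_disjoint (h : ¬Disjoint A (G.neighborSet b)) : 0 < degIn G A b := by
  rw [degIn, Set.inter_comm]
  exact (Set.ncard_pos (Set.toFinite _)).2 (Set.not_disjoint_iff_nonempty_inter.1 h)

lemma eBetween_union_left (h : Disjoint A₁ A₂) :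
    eBetween G (A₁ ∪ A₂) B = eBetween G A₁ B + eBetween G A₂ B := by
  rw [eBetween, eBetween, eBetween, ← Set.ncard_union_eq _ (Set.toFinite _) (Set.toFinite _)]
  · congr 1
    ext p
    simp only [Set.mem_ofPred_eq, Set.mem_union]
    tauto
  · exact Set.disjoint_left.2 fun p hp₁ hp₂ => Set.disjoint_left.1 h hp₁.1 hp₂.1

lemma eBetween_union_right (h : Disjoint B₁ B₂) :
    eBetween G A (B₁ ∪ B₂) = eBetween G A B₁ + eBetween G A B₂ := by
  rw [eBetween, eBetween, eBetween, ← Set.ncard_union_eq _ (Set.toFinite _) (Set.toFinite _)]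
  · congr 1
    ext p
    simp only [Set.mem_ofPred_eq, Set.mem_union]
    tauto
  · exact Set.disjoint_left.2 fun p hp₁ hp₂ => Set.disjoint_left.1 h hp₁.2.1 hp₂.2.1

lemma eBetween_sUnion_left (hF : F.PairwiseDisjoint id) :
    eBetween G (⋃₀ F) B = ∑ᶠ A ∈ F, eBetween G A B := by
  have : {p : V × V | p.1 ∈ ⋃₀ F ∧ p.2 ∈ B ∧ G.Adj p.1 p.2} =
      ⋃ A ∈ F, {p : V × V | p.1 ∈ A ∧ p.2 ∈ B ∧ G.Adj p.1 p.2} := by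
    ext p
    simp only [Set.mem_ofPred_eq, Set.mem_sUnion, Set.mem_iUnion, exists_prop]
    constructor
    · rintro ⟨⟨A, hA, hp⟩, hB⟩
      exact ⟨A, hA, hp, hB⟩
    · rintro ⟨A, hA, hp, hB⟩
      exact ⟨⟨A, hA, hp⟩, hB⟩
  rw [eBetween, this, (Set.toFinite F).ncard_biUnion (fun _ _ => Set.toFinite _)]
  · rfl
  · exact fun A hA A' hA' hAA' => Set.disjoint_left.2 fun p hp hp' =>
      Set.disjoint_left.1 (hF hA hA' hAA') hp.1 hp'.1

lemma eBetween_eq_degIn_add (hb : b ∈ B) :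
    eBetween G A B = degIn G A b + eBetween G A (B \ {b}) := by
  conv_lhs => rw [← Set.union_sdiff_cancel (Set.singleton_subset_iff.2 hb)]
  rw [eBetween_union_right Set.disjoint_sdiff_right, eBetween_singleton_right]

lemma degIn_union (h : Disjoint A₁ A₂) : degIn G (A₁ ∪ A₂) b = degIn G A₁ b + degIn G A₂ b := by
  simp only [← eBetween_singleton_right, eBetween_union_left h]

lemma degIn_sUnion (hF : F.PairwiseDisjoint id) :
    degIn G (⋃₀ F) b = ∑ᶠ A ∈ F, degIn G A b := by
  simp only [← eBetween_singleton_right, eBetween_sUnion_left hF]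

end counting

section partition

variable [Finite V] {G : SimpleGraph V} {W : Set V} {c v : V}

lemma finsum_componentSets (hiso : reachSet G W c = {c}) (hvc : G.Adj v c) (f : Set V → ℕ) :
    ∑ᶠ A ∈ componentSets G W, f A = f {c} + ∑ᶠ A ∈ touchingComponents G W c v, f A +
      ∑ᶠ A ∈ avoidingComponents G W v, f A := by
  rw [componentSets_eq_insert hiso, finsum_mem_insert _ ?_ (Set.toFinite _),
    finsum_mem_union ?_ (Set.toFinite _) (Set.toFinite _), add_assoc]
  · exact Set.disjoint_left.2 fun _ ⟨_, _, h⟩ ⟨_, h'⟩ => h h'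
  · rintro (⟨-, h, -⟩ | ⟨-, h⟩)
    exacts [h rfl, Set.disjoint_left.1 h rfl hvc]

lemma finsum_componentSets_exchange (hvW : v ∉ W) (hiso : reachSet G W c = {c})
    (hvc : G.Adj v c) (f : Set V → ℕ) :
    ∑ᶠ A ∈ componentSets G (insert v (W \ {c})), f A =
      f (insert v (⋃₀ touchingComponents G W c v)) + ∑ᶠ A ∈ avoidingComponents G W v, f A := by
  rw [componentSets_exchange hvW hiso hvc, finsum_mem_insert _ ?_ (Set.toFinite _)]
  rintro ⟨hA, -⟩
  exact hvW (subset_of_mem_componentSets hA (Set.mem_insert _ _))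

end partition

lemma hNum_eq_finsum [Finite V] (G : SimpleGraph V) (S T : Set V) :
    hNum G S T = ∑ᶠ A ∈ componentSets G (S ∪ T)ᶜ, eBetween G A T % 2 := by
  rw [← range_csupp, finsum_mem_range csupp_injective, ← finsum_mem_univ,
    ← ncard_sep_odd_eq_finsum_mod_two Set.finite_univ, hNum, oddComps]
  simp only [Set.mem_univ, true_and]

/-- `c` is a one-vertex component of `G - (S ∪ T)` whose only edge to `T` goes to `v ∈ T`. -/
structure IsPendantComponent (G : SimpleGraph V) (S T : Set V) (c v : V) : Prop where
  disjoint : Disjoint S T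
  mem : v ∈ T
  isolated : reachSet G (S ∪ T)ᶜ c = {c}
  neighborSet_inter : G.neighborSet c ∩ T = {v}

namespace IsPendantComponent

variable {G : SimpleGraph V} {S T : Set V} {c v : V}

lemma adj (h : IsPendantComponent G S T c v) : G.Adj v c :=
  (h.neighborSet_inter ▸ Set.mem_singleton v : v ∈ G.neighborSet c ∩ T).1.symm

lemma mem_compl (h : IsPendantComponent G S T c v) : c ∈ (S ∪ T)ᶜ :=
  mem_of_reachSet_eq_singleton h.isolated

lemma notMem_compl (h : IsPendantComponent G S T c v) : v ∉ (S ∪ T)ᶜ :=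
  fun hv => hv (Or.inr h.mem)

lemma degIn_eq_zero (h : IsPendantComponent G S T c v) {A : Set V} (hA : A ⊆ (S ∪ T)ᶜ) :
    degIn G A c = 0 := by
  have : G.neighborSet c ∩ A = ∅ := Set.eq_empty_of_forall_notMem fun z ⟨hcz, hzA⟩ => by
    have hz := mem_reachSet_of_adj (mem_reachSet_self h.mem_compl) (hA hzA) hcz
    rw [h.isolated] at hz
    exact G.ne_of_adj hcz hz.symm
  rw [degIn, this, Set.ncard_empty]

lemma compl_union_exchange (h : IsPendantComponent G S T c v) :
    (S ∪ insert c (T \ {v}))ᶜ = insert v ((S ∪ T)ᶜ \ {c}) := by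
  rw [union_insert_sdiff (Set.disjoint_right.1 h.disjoint h.mem),
    compl_insert_sdiff h.mem_compl (Or.inr h.mem)]

variable [Finite V]

lemma eBetween_exchange_add (h : IsPendantComponent G S T c v) (A : Set V) :
    eBetween G A (insert c (T \ {v})) + degIn G A v = eBetween G A T + degIn G A c := by
  rw [eBetween_eq_degIn_add (Set.mem_insert c _), eBetween_eq_degIn_add h.mem,
    Set.insert_sdiff_self_of_notMem (fun hc => h.mem_compl (Or.inr hc.1))]
  ring

lemma degIn_compl_eq (h : IsPendantComponent G S T c v) (x : V) :
    degIn G Sᶜ x = degIn G T x + degIn G (S ∪ T)ᶜ x := by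
  rw [← degIn_union (Set.disjoint_compl_right_iff_subset.2 Set.subset_union_right)]
  congr 1
  ext y
  have : y ∈ S → y ∉ T := fun hy => Set.disjoint_left.1 h.disjoint hy
  simp only [Set.mem_compl_iff, Set.mem_union]
  tauto

lemma degIn_compl_left_eq_one (h : IsPendantComponent G S T c v) : degIn G Sᶜ c = 1 := by
  rw [h.degIn_compl_eq, h.degIn_eq_zero subset_rfl, degIn, h.neighborSet_inter,
    Set.ncard_singleton]

lemma hNum_eq (h : IsPendantComponent G S T c v) :
    hNum G S T = 1 + ∑ᶠ A ∈ touchingComponents G (S ∪ T)ᶜ c v, eBetween G A T % 2 +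
      ∑ᶠ A ∈ avoidingComponents G (S ∪ T)ᶜ v, eBetween G A T % 2 := by
  rw [hNum_eq_finsum, finsum_componentSets h.isolated h.adj, eBetween_singleton_left, degIn,
    h.neighborSet_inter, Set.ncard_singleton]

lemma hNum_exchange_eq (h : IsPendantComponent G S T c v) :
    hNum G S (insert c (T \ {v})) =
      eBetween G (insert v (⋃₀ touchingComponents G (S ∪ T)ᶜ c v)) (insert c (T \ {v})) % 2 +
      ∑ᶠ A ∈ avoidingComponents G (S ∪ T)ᶜ v, eBetween G A T % 2 := by
  rw [hNum_eq_finsum, h.compl_union_exchange,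
    finsum_componentSets_exchange h.notMem_compl h.isolated h.adj]
  congr 1
  refine finsum_mem_congr rfl fun A hA => ?_
  have := h.eBetween_exchange_add A
  rw [h.degIn_eq_zero (subset_of_mem_componentSets hA.1), degIn_eq_zero_of_disjoint hA.2,
    add_zero, add_zero] at this
  rw [this]

lemma degIn_compl_eq_add (h : IsPendantComponent G S T c v) :
    degIn G Sᶜ v =
      degIn G T v + 1 + ∑ᶠ A ∈ touchingComponents G (S ∪ T)ᶜ c v, degIn G A v := by
  have hW : degIn G (S ∪ T)ᶜ v = ∑ᶠ A ∈ componentSets G (S ∪ T)ᶜ, degIn G A v := by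
    rw [← degIn_sUnion pairwiseDisjoint_componentSets, sUnion_componentSets]
  rw [h.degIn_compl_eq, hW, finsum_componentSets h.isolated h.adj,
    degIn_singleton_eq_one_iff.2 h.adj,
    finsum_mem_eq_zero_of_forall_eq_zero (s := avoidingComponents G (S ∪ T)ᶜ v)
      fun A hA => degIn_eq_zero_of_disjoint hA.2]
  ring

lemma eBetween_insert_touching (h : IsPendantComponent G S T c v) :
    eBetween G (insert v (⋃₀ touchingComponents G (S ∪ T)ᶜ c v)) (insert c (T \ {v})) =
      degIn G T v + 1 +
        ∑ᶠ A ∈ touchingComponents G (S ∪ T)ᶜ c v, eBetween G A (insert c (T \ {v})) := by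
  have hv : Disjoint {v} (⋃₀ touchingComponents G (S ∪ T)ᶜ c v) :=
    Set.disjoint_singleton_left.2 fun ⟨A, hA, hvA⟩ =>
      h.notMem_compl (subset_of_mem_componentSets hA.1 hvA)
  rw [Set.insert_eq, eBetween_union_left hv,
    eBetween_sUnion_left (pairwiseDisjoint_componentSets.subset fun _ hA => hA.1)]
  have := h.eBetween_exchange_add {v}
  rw [degIn_singleton_self, degIn_singleton_eq_one_iff.2 h.adj.symm,
    eBetween_singleton_left (B := T)] at this
  omega

lemma finsum_touching_eBetween (h : IsPendantComponent G S T c v) :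
    ∑ᶠ A ∈ touchingComponents G (S ∪ T)ᶜ c v, eBetween G A T =
      ∑ᶠ A ∈ touchingComponents G (S ∪ T)ᶜ c v, degIn G A v +
        ∑ᶠ A ∈ touchingComponents G (S ∪ T)ᶜ c v, eBetween G A (insert c (T \ {v})) := by
  rw [← finsum_mem_add_distrib (Set.toFinite _)]
  refine finsum_mem_congr rfl fun A hA => ?_
  have := h.eBetween_exchange_add A
  rw [h.degIn_eq_zero (subset_of_mem_componentSets hA.1)] at this
  omega

lemma hNum_add_one_le (h : IsPendantComponent G S T c v) :
    hNum G S T + 1 ≤ hNum G S (insert c (T \ {v})) + degIn G Sᶜ v := by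
  have hle : ∑ᶠ A ∈ touchingComponents G (S ∪ T)ᶜ c v, eBetween G A T % 2 ≤
      ∑ᶠ A ∈ touchingComponents G (S ∪ T)ᶜ c v, degIn G A v :=
    finsum_mem_le_finsum_mem (Set.toFinite _) fun A hA =>
      (Nat.le_of_lt_succ (Nat.mod_lt _ two_pos)).trans (degIn_pos_of_not_disjoint hA.2.2)
  have hmod := finsum_mem_mod_mod (Set.toFinite (touchingComponents G (S ∪ T)ᶜ c v))
    (fun A => eBetween G A T) 2
  rw [h.finsum_touching_eBetween] at hmod
  rw [h.hNum_eq, h.hNum_exchange_eq, h.eBetween_insert_touching, h.degIn_compl_eq_add]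
  -- If `hle` is tight and `v` has no neighbour in `T`, `hmod` makes the merged component odd.
  omega

lemma hNum_exchange_lt (h : IsPendantComponent G S T c v)
    (hodd : ∃ A ∈ touchingComponents G (S ∪ T)ᶜ c v, Odd (eBetween G A T)) :
    hNum G S (insert c (T \ {v})) < hNum G S T := by
  have hpos : 0 < ∑ᶠ A ∈ touchingComponents G (S ∪ T)ᶜ c v, eBetween G A T % 2 := by
    rw [← ncard_sep_odd_eq_finsum_mod_two (Set.toFinite _)]
    exact (Set.ncard_pos (Set.toFinite _)).2 hodd
  rw [h.hNum_eq, h.hNum_exchange_eq]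
  omega

lemma deltaST_exchange (h : IsPendantComponent G S T c v) :
    deltaST G S (insert c (T \ {v})) + degIn G Sᶜ v + hNum G S (insert c (T \ {v})) =
      deltaST G S T + 1 + hNum G S T := by
  have hcT : c ∉ T := fun hc => h.mem_compl (Or.inr hc)
  have hsum := finsum_mem_insert_sdiff_add (Set.toFinite T) hcT h.mem
    (fun x => (degIn G Sᶜ x : ℤ))
  rw [h.degIn_compl_left_eq_one, Nat.cast_one] at hsum
  rw [deltaST, deltaST, Set.ncard_exchange hcT h.mem]
  linarith

lemma isMinBarrier_exchange (h : IsPendantComponent G S T c v) (hmin : IsMinBarrier G S T) :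
    IsMinBarrier G S (insert c (T \ {v})) := by
  have hcS : c ∉ S := fun hc => h.mem_compl (Or.inl hc)
  have hδ := h.deltaST_exchange
  have hh : (hNum G S T + 1 : ℤ) ≤ hNum G S (insert c (T \ {v})) + degIn G Sᶜ v := by
    exact_mod_cast h.hNum_add_one_le
  refine ⟨⟨Set.disjoint_insert_right.2 ⟨hcS, h.disjoint.mono_right Set.sdiff_subset⟩,
    by linarith [hmin.1.2]⟩, fun S' T' hST' => ?_⟩
  rw [union_insert_sdiff (Set.disjoint_right.1 h.disjoint h.mem),
    Set.ncard_exchange (fun hc => h.mem_compl hc) (Or.inr h.mem)]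
  exact hmin.2 S' T' hST'

end IsPendantComponent

lemma exists_csupp_eq_singleton [Finite V] {G : SimpleGraph V} {W : Set V}
    {D : (G.induce W).ConnectedComponent} (hD : (csupp G W D).ncard < 2) :
    ∃ c, csupp G W D = {c} := by
  have hpos : 0 < (csupp G W D).ncard :=
    (Set.ncard_pos (Set.toFinite _)).2 (D.nonempty_supp.image _)
  exact Set.ncard_eq_one.1 (by omega)

lemma isPendantComponent_of_csupp_eq [Finite V] {G : SimpleGraph V} {S T : Set V} {c v : V}
    {D : (G.induce (S ∪ T)ᶜ).ConnectedComponent} (hST : Disjoint S T) (hv : v ∈ T)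
    (hc : csupp G (S ∪ T)ᶜ D = {c}) (hcT : eBetween G {c} T = 1) (hcv : degIn G {c} v = 1) :
    IsPendantComponent G S T c v := by
  refine ⟨hST, hv, reachSet_eq_of_mem_componentSets (hc ▸ range_csupp ▸ ⟨D, rfl⟩) rfl, ?_⟩
  rw [eBetween_singleton_left, degIn, Set.ncard_eq_one] at hcT
  obtain ⟨w, hw⟩ := hcT
  have hvw : v ∈ G.neighborSet c ∩ T := ⟨(degIn_singleton_eq_one_iff.1 hcv).symm, hv⟩
  rw [hw] at hvw ⊢
  rw [Set.mem_singleton_iff.1 hvw]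

theorem vizing_stmt_11_general [Fintype V] (G : SimpleGraph V) (S T : Set V)
    (hmin : IsMinBarrier G S T)
    (hh : ∀ S' T' : Set V, IsMinBarrier G S' T' → hNum G S T ≤ hNum G S' T')
    (v : V) (hv : v ∈ T)
    (hCv : 2 ≤ {C ∈ oddComps G S T | degIn G (csupp G (S ∪ T)ᶜ C) v = 1}.ncard) :
    ∀ D ∈ {C ∈ oddComps G S T | eBetween G (csupp G (S ∪ T)ᶜ C) T = 1 ∧
        degIn G (csupp G (S ∪ T)ᶜ C) v = 1},
      2 ≤ (csupp G (S ∪ T)ᶜ D).ncard := by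
  rintro D ⟨-, hDT, hDv⟩
  by_contra! hD
  obtain ⟨c, hc⟩ := exists_csupp_eq_singleton hD
  rw [hc] at hDT hDv
  have h := isPendantComponent_of_csupp_eq hmin.1.1 hv hc hDT hDv
  obtain ⟨C, ⟨hCodd, hCv⟩, hCD⟩ := Set.exists_ne_of_one_lt_ncard hCv D
  have hodd : ∃ A ∈ touchingComponents G (S ∪ T)ᶜ c v, Odd (eBetween G A T) :=
    ⟨csupp G (S ∪ T)ᶜ C, ⟨range_csupp ▸ ⟨C, rfl⟩, hc ▸ csupp_injective.ne hCD,
      fun hd => zero_ne_one ((degIn_eq_zero_of_disjoint hd).symm.trans hCv)⟩, hCodd⟩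
  exact (hh _ _ (h.isMinBarrier_exchange hmin)).not_gt (h.hNum_exchange_lt hodd)

theorem vizing_stmt_11 [Fintype V] (G : SimpleGraph V) (S T : Set V)
    (hG : ¬ HasTwoFactor G) (hmin : IsMinBarrier G S T)
    (hh : ∀ S' T' : Set V, IsMinBarrier G S' T' → hNum G S T ≤ hNum G S' T')
    (v : V) (hv : v ∈ T)
    (hCv : 2 ≤ {C ∈ oddComps G S T | degIn G (csupp G (S ∪ T)ᶜ C) v = 1}.ncard) :
    ∀ D ∈ {C ∈ oddComps G S T | eBetween G (csupp G (S ∪ T)ᶜ C) T = 1 ∧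
        degIn G (csupp G (S ∪ T)ᶜ C) v = 1},
      2 ≤ (csupp G (S ∪ T)ᶜ D).ncard :=
  vizing_stmt_11_general G S T hmin hh v hv hCv

end VizingTwoFactor
end

section
/- Let G be an n-vertex Δ-critical graph with Δ ≥ n/2, without a 2-factor, and let (S,T) be a minimum barrier with h_G(S,T) smallest. Suppose |S| < |T|, T is independent, vertices of T send no edges to even components and at most one edge to each odd component of G−(S∪T). If C is an odd component containing a vertex x with deg_G(x) = Δ and e_G(x,T) ≤ 1, then |V(C)| > |V(𝒞_{≥1})|/2, where V(𝒞_{≥1}) is the union of vertex sets of all odd components. -/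
/-!
Since `x` has degree `Δ` and all its neighbours lie in `S`, in `T` (at most one) or in `C`,
we get `Δ ≤ |S| + |C|`. The odd components are disjoint from `S ∪ T`, so
`|S| + |T| + |V(𝒞_{≥1})| ≤ n ≤ 2Δ ≤ 2|S| + 2|C|`, and `|S| < |T|` gives `|V(𝒞_{≥1})| < 2|C|`.
-/

open SimpleGraph

namespace VizingTwoFactor

variable {V : Type*}

theorem Set.ncard_add_ncard_add_ncard_le_of_subset_compl {α : Type*} [Finite α]
    {S T W : Set α} (hST : Disjoint S T) (hW : W ⊆ (S ∪ T)ᶜ) :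
    S.ncard + T.ncard + W.ncard ≤ Nat.card α := by
  rw [← Set.ncard_union_eq hST, ← Set.ncard_add_ncard_compl (S ∪ T)]
  exact Nat.add_le_add_left (Set.ncard_le_ncard hW) _

section Degrees

variable (G : SimpleGraph V)

theorem degIn_le_ncard [Finite V] (A : Set V) (v : V) : degIn G A v ≤ A.ncard :=
  Set.ncard_inter_le_ncard_right _ _

theorem degIn_union_le (A B : Set V) (v : V) :
    degIn G (A ∪ B) v ≤ degIn G A v + degIn G B v := by
  unfold degIn
  rw [Set.inter_union_distrib_left]
  exact Set.ncard_union_le _ _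

end Degrees

section Components

variable {G : SimpleGraph V} {U : Set V} {C : (G.induce U).ConnectedComponent}

theorem csupp_subset : csupp G U C ⊆ U := by
  rintro _ ⟨u, -, rfl⟩
  exact u.2

theorem neighborSet_subset_compl_union_csupp {x : V} (hx : x ∈ csupp G U C) :
    G.neighborSet x ⊆ Uᶜ ∪ (csupp G U C \ {x}) := by
  obtain ⟨x', rfl, rfl⟩ := hx
  intro y hy
  by_cases hyU : y ∈ U
  · refine Or.inr ⟨⟨⟨y, hyU⟩, ?_, rfl⟩, (G.ne_of_adj hy).symm⟩
    exact ConnectedComponent.connectedComponentMk_eq_of_adj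
      (show (G.induce U).Adj x' ⟨y, hyU⟩ from hy) |>.symm
  · exact Or.inl hyU

/-- The `+ 1` accounts for `x` itself, which lies in its component but is not its own
neighbour. -/
theorem ndeg_add_one_le_degIn_compl_add_ncard_csupp [Finite V] {x : V}
    (hx : x ∈ csupp G U C) :
    ndeg G x + 1 ≤ degIn G Uᶜ x + (csupp G U C).ncard := by
  have hsub : G.neighborSet x ⊆ (G.neighborSet x ∩ Uᶜ) ∪ (csupp G U C \ {x}) := fun y hy =>
    (neighborSet_subset_compl_union_csupp hx hy).imp (fun hyU => ⟨hy, hyU⟩) id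
  have hpos : 0 < (csupp G U C).ncard := (Set.ncard_pos (Set.toFinite _)).2 ⟨x, hx⟩
  have hle := (Set.ncard_le_ncard hsub (Set.toFinite _)).trans (Set.ncard_union_le _ _)
  rw [Set.ncard_sdiff_singleton_of_mem hx] at hle
  unfold ndeg degIn
  omega

end Components

theorem vizing_stmt_15_general [Fintype V] (G : SimpleGraph V) (Δ : ℕ)
    (hΔ : Fintype.card V ≤ 2 * Δ)
    (S T : Set V) (hmin : IsMinBarrier G S T)
    (hST : S.ncard < T.ncard)
    (C : (G.induce (S ∪ T)ᶜ).ConnectedComponent)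
    (x : V) (hx : x ∈ csupp G (S ∪ T)ᶜ C)
    (hxdeg : ndeg G x = Δ) (hxT : degIn G T x ≤ 1) :
    {v : V | ∃ D ∈ oddComps G S T, v ∈ csupp G (S ∪ T)ᶜ D}.ncard <
      2 * (csupp G (S ∪ T)ᶜ C).ncard := by
  have hdeg := ndeg_add_one_le_degIn_compl_add_ncard_csupp hx
  rw [compl_compl] at hdeg
  have hdegST := degIn_union_le G S T x
  have hdegS := degIn_le_ncard G S x
  have hodd_sub : {v : V | ∃ D ∈ oddComps G S T, v ∈ csupp G (S ∪ T)ᶜ D} ⊆ (S ∪ T)ᶜ := by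
    rintro v ⟨D, -, hv⟩
    exact csupp_subset hv
  have hcount := Set.ncard_add_ncard_add_ncard_le_of_subset_compl hmin.1.1 hodd_sub
  rw [Nat.card_eq_fintype_card] at hcount
  omega

theorem vizing_stmt_15 [Fintype V] (G : SimpleGraph V) (Δ : ℕ)
    (hcrit : IsDeltaCritical G Δ) (hΔ : Fintype.card V ≤ 2 * Δ)
    (hG : ¬ HasTwoFactor G) (S T : Set V) (hmin : IsMinBarrier G S T)
    (hh : ∀ S' T' : Set V, IsMinBarrier G S' T' → hNum G S T ≤ hNum G S' T')
    (hST : S.ncard < T.ncard) (hTind : IsIndep G T)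
    (heven : ∀ C : (G.induce (S ∪ T)ᶜ).ConnectedComponent,
      Even (eBetween G (csupp G (S ∪ T)ᶜ C) T) →
      eBetween G (csupp G (S ∪ T)ᶜ C) T = 0)
    (hodd1 : ∀ C ∈ oddComps G S T, ∀ v ∈ T, degIn G (csupp G (S ∪ T)ᶜ C) v ≤ 1)
    (C : (G.induce (S ∪ T)ᶜ).ConnectedComponent) (hC : C ∈ oddComps G S T)
    (x : V) (hx : x ∈ csupp G (S ∪ T)ᶜ C)
    (hxdeg : ndeg G x = Δ) (hxT : degIn G T x ≤ 1) :
    {v : V | ∃ D ∈ oddComps G S T, v ∈ csupp G (S ∪ T)ᶜ D}.ncard <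
      2 * (csupp G (S ∪ T)ᶜ C).ncard :=
  vizing_stmt_15_general G Δ hΔ S T hmin hST C x hx hxdeg hxT

end VizingTwoFactor
end
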